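/- arXiv:1105.1571 — 3 statements merged into one kernel-verified Lean document; each statement's English description precedes it below -/
import Mathlib

section
/- Let ψ : ℝ → ℂ be a Schwartz function whose Fourier transform ψ̂ is supported in [1−Δ, 1+Δ] with 0 < Δ < 1, and set C_ψ = ∫_0^∞ conj(ψ̂(ξ))·ξ^{−1} dξ. Let η > 0, A ∈ ℝ, and f(t) = A·cos(2πηt). Then for every b ∈ ℝ, ∫_0^∞ W_f(a,b)·a^{−3/2} da = (A/2)·C_ψ·exp(2πiηb). In particular, the harmonic signal can be exactly reconstructed from its continuous wavelet transform by integrating over scales. -/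
/-!
Writing `cos` as the mean of two complex exponentials and substituting `t = a s + b`, each half
of the wavelet transform becomes a conjugated value of `ψ̂`:
`W_f(a,b) = √a · (A/2) · (e^{2πiηb} conj ψ̂(ηa) + e^{-2πiηb} conj ψ̂(-ηa))`.
Since `ψ̂` vanishes on the negative half-line only the first term survives, and the substitution
`ξ = ηa` turns `∫₀^∞ W_f(a,b) a^{-3/2} da` into `(A/2) e^{2πiηb} C_ψ`.
-/

open MeasureTheory

/-- The continuous wavelet transform
`W_f(a,b) = a^{-1/2} ∫ f(t) conj(ψ((t-b)/a)) dt`. -/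
noncomputable def CWT (ψ f : ℝ → ℂ) (a b : ℝ) : ℂ :=
  ((Real.sqrt a : ℝ) : ℂ)⁻¹ * ∫ t : ℝ, f t * (starRingEnd ℂ) (ψ ((t - b) / a))

open scoped Real FourierTransform ComplexConjugate

lemma ofReal_eq_sqrt_sq {a : ℝ} (ha : 0 ≤ a) : (a : ℂ) = (√a : ℂ) ^ 2 := by
  rw [← Complex.ofReal_pow, Real.sq_sqrt ha]

lemma conj_fourier_eq_integral (g : ℝ → ℂ) (ξ : ℝ) :
    conj (𝓕 g ξ) = ∫ s, Complex.exp (↑(2 * π * ξ * s) * Complex.I) * conj (g s) := by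
  rw [Real.fourier_real_eq_integral_exp_smul, ← integral_conj]
  congr 1 with s
  rw [smul_eq_mul, map_mul, ← Complex.exp_conj, map_mul, Complex.conj_ofReal, Complex.conj_I]
  congr 2
  push_cast
  ring

lemma integral_exp_mul_conj_comp_affine (ψ : ℝ → ℂ) (c b : ℝ) {a : ℝ} (ha : 0 < a) :
    ∫ t, Complex.exp (↑(2 * π * c * t) * Complex.I) * conj (ψ ((t - b) / a)) =
      a * Complex.exp (↑(2 * π * c * b) * Complex.I) * conj (𝓕 ψ (c * a)) := by
  set H : ℝ → ℂ := fun s ↦ Complex.exp (↑(2 * π * c * (a * s + b)) * Complex.I) * conj (ψ s)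
  have hH : ∀ t, Complex.exp (↑(2 * π * c * t) * Complex.I) * conj (ψ ((t - b) / a)) =
      H ((t - b) / a) := fun t ↦ by
    simp only [H]
    rw [mul_div_cancel₀ _ ha.ne', sub_add_cancel]
  have hH_int : ∫ s, H s = Complex.exp (↑(2 * π * c * b) * Complex.I) * conj (𝓕 ψ (c * a)) := by
    rw [conj_fourier_eq_integral, ← integral_const_mul]
    congr 1 with s
    simp only [H]
    rw [← mul_assoc, ← Complex.exp_add]
    congr 2
    push_cast
    ring
  simp_rw [hH]
  rw [integral_sub_right_eq_self (fun u ↦ H (u / a)) b, Measure.integral_comp_div H a,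
    abs_of_pos ha, hH_int, Complex.real_smul]
  exact (mul_assoc _ _ _).symm

lemma integrable_conj {g : ℝ → ℂ} (hg : Integrable g) : Integrable fun t ↦ conj (g t) :=
  memLp_one_iff_integrable.1 (memLp_one_iff_integrable.2 hg).star

lemma integral_cos_mul {g : ℝ → ℂ} (hg : Integrable g) (c : ℝ) :
    ∫ t, (Real.cos (2 * π * c * t) : ℂ) * g t =
      ((∫ t, Complex.exp (↑(2 * π * c * t) * Complex.I) * g t) +
        ∫ t, Complex.exp (↑(2 * π * -c * t) * Complex.I) * g t) / 2 := by
  have hexp_int : ∀ c' : ℝ,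
      Integrable fun t ↦ Complex.exp (↑(2 * π * c' * t) * Complex.I) * g t := fun c' ↦
    hg.bdd_mul (c := 1) (by fun_prop)
      (.of_forall fun t ↦ (Complex.norm_exp_ofReal_mul_I _).le)
  rw [← integral_add (hexp_int c) (hexp_int (-c)), ← integral_div]
  congr 1 with t
  rw [Complex.ofReal_cos, Complex.cos]
  push_cast
  ring_nf

lemma CWT_const_mul_cos {ψ : ℝ → ℂ} (hψ : Integrable ψ) (hψ_neg : ∀ ξ < 0, 𝓕 ψ ξ = 0)
    {η : ℝ} (hη : 0 < η) (A b : ℝ) {a : ℝ} (ha : 0 < a) :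
    CWT ψ (fun t ↦ A * (Real.cos (2 * π * η * t) : ℂ)) a b =
      √a * ((A / 2 : ℝ) * Complex.exp (↑(2 * π * η * b) * Complex.I) * conj (𝓕 ψ (η * a))) := by
  have hψ_affine : Integrable fun t ↦ conj (ψ ((t - b) / a)) :=
    integrable_conj ((hψ.comp_div ha.ne').comp_sub_right b)
  have h_neg_freq : 𝓕 ψ (-η * a) = 0 := hψ_neg _ (by nlinarith)
  have hsqrt := ofReal_eq_sqrt_sq ha.le
  have hsqrt_ne : (√a : ℂ) ≠ 0 := by exact_mod_cast (Real.sqrt_pos.2 ha).ne'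
  simp_rw [CWT, mul_assoc (A : ℂ)]
  rw [integral_const_mul, integral_cos_mul hψ_affine, integral_exp_mul_conj_comp_affine ψ _ b ha,
    integral_exp_mul_conj_comp_affine ψ _ b ha, h_neg_freq, map_zero, mul_zero, add_zero, hsqrt]
  field_simp
  push_cast
  ring

theorem stmt8_general (ψ : SchwartzMap ℝ ℂ) (Δ : ℝ) (hΔ1 : Δ < 1)
    (hsupp : ∀ ξ : ℝ, ξ ∉ Set.Icc (1 - Δ) (1 + Δ) → FourierTransform.fourier (⇑ψ : ℝ → ℂ) ξ = 0)
    (Cψ : ℂ)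
    (hCψ : Cψ = ∫ ξ in Set.Ioi (0 : ℝ),
      (starRingEnd ℂ) (FourierTransform.fourier (⇑ψ : ℝ → ℂ) ξ) * ((ξ : ℝ) : ℂ)⁻¹)
    (η A : ℝ) (hη : 0 < η) (f : ℝ → ℂ)
    (hf : ∀ t : ℝ, f t = (A : ℂ) * (Real.cos (2 * Real.pi * η * t) : ℝ)) :
    ∀ b : ℝ,
      ∫ a in Set.Ioi (0 : ℝ), CWT (⇑ψ) f a b * ((Real.sqrt a ^ 3 : ℝ) : ℂ)⁻¹ =
        ((A / 2 : ℝ) : ℂ) * Cψ * Complex.exp (2 * Real.pi * Complex.I * η * b) := by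
  intro b
  have hf' : f = fun t ↦ (A : ℂ) * (Real.cos (2 * π * η * t) : ℂ) := funext hf
  have hψ_neg : ∀ ξ < 0, 𝓕 (⇑ψ) ξ = 0 := fun ξ hξ ↦ hsupp ξ fun h ↦ by linarith [h.1]
  have hη_ne : (η : ℂ) ≠ 0 := by exact_mod_cast hη.ne'
  set K : ℂ := (A / 2 : ℝ) * Complex.exp (↑(2 * π * η * b) * Complex.I)
  set G : ℝ → ℂ := fun ξ ↦ conj (𝓕 (⇑ψ) ξ) * (ξ : ℂ)⁻¹
  have h_integrand : ∀ a ∈ Set.Ioi (0 : ℝ),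
      CWT ψ f a b * ((√a ^ 3 : ℝ) : ℂ)⁻¹ = K * η * G (η * a) := fun a ha ↦ by
    have hsqrt_ne : (√a : ℂ) ≠ 0 := by exact_mod_cast (Real.sqrt_pos.2 ha).ne'
    rw [hf', CWT_const_mul_cos ψ.integrable hψ_neg hη A b ha]
    simp only [G, K]
    push_cast
    rw [ofReal_eq_sqrt_sq (le_of_lt ha)]
    field_simp
  rw [setIntegral_congr_fun measurableSet_Ioi h_integrand, integral_const_mul,
    integral_comp_mul_left_Ioi G 0 hη, mul_zero, ← hCψ, Complex.real_smul]
  simp only [K]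
  push_cast
  field_simp

theorem stmt8 (ψ : SchwartzMap ℝ ℂ) (Δ : ℝ) (hΔ0 : 0 < Δ) (hΔ1 : Δ < 1)
    (hsupp : ∀ ξ : ℝ, ξ ∉ Set.Icc (1 - Δ) (1 + Δ) → FourierTransform.fourier (⇑ψ : ℝ → ℂ) ξ = 0)
    (Cψ : ℂ)
    (hCψ : Cψ = ∫ ξ in Set.Ioi (0 : ℝ),
      (starRingEnd ℂ) (FourierTransform.fourier (⇑ψ : ℝ → ℂ) ξ) * ((ξ : ℝ) : ℂ)⁻¹)
    (η A : ℝ) (hη : 0 < η) (f : ℝ → ℂ)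
    (hf : ∀ t : ℝ, f t = (A : ℂ) * (Real.cos (2 * Real.pi * η * t) : ℝ)) :
    ∀ b : ℝ,
      ∫ a in Set.Ioi (0 : ℝ), CWT (⇑ψ) f a b * ((Real.sqrt a ^ 3 : ℝ) : ℂ)⁻¹ =
        ((A / 2 : ℝ) : ℂ) * Cψ * Complex.exp (2 * Real.pi * Complex.I * η * b) :=
  stmt8_general ψ Δ hΔ1 hsupp Cψ hCψ η A hη f hf
end

section
/- Let ψ : ℝ → ℂ be a Schwartz function whose Fourier transform ψ̂ is supported in [1−Δ, 1+Δ] with 0 < Δ < 1, and set C_ψ = ∫_0^∞ conj(ψ̂(ξ))·ξ^{−1} dξ. Let f(t) = A(t)·cos(2πφ(t)) be an intrinsic-mode-type function with accuracy ε (parameters c₁, M₂). Then for every b ∈ ℝ, | ∫_{(1−Δ)/φ'(b)}^{(1+Δ)/φ'(b)} W_f(a,b)·a^{−3/2} da − (1/2)·C_ψ·A(b)·exp(2πiφ(b)) | ≤ ε·M₂·( 2Δ·I₁/c₁ + 2πΔ·‖A‖∞·I₂/c₁² ). That is, integrating the wavelet transform over the scale band around 1/φ'(b) recovers the analytic amplitude-phase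 representation of f up to an O(ε) error. -/
open MeasureTheory

open Real Set FourierTransform
open scoped ComplexConjugate

/-!
Near `b` the mode `A(t) cos(2πφ(t))` is close to the frozen mode
`A(b) cos(2π(φ(b) + φ'(b)(t - b)))`: by the mean value theorem and a second-order Taylor bound
the difference is at most `εM₂|t - b| + πεM₂‖A‖∞(t - b)²`. The wavelet transform of the frozen
mode is explicit: since `ψ̂` vanishes at negative frequencies only the `e^{2πiφ}` half of the
cosine survives, so `W(a,b) a^{-3/2} = ½ A(b) e^{2πiφ(b)} conj(ψ̂(φ'(b) a)) / a`, and the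
dilation-invariant substitution `ξ = φ'(b) a` turns its band integral into
`½ C_ψ A(b) e^{2πiφ(b)}`. In the transform of the difference the two error terms produce the
moments `I₁` and `I₂` of `ψ`; integrating over the band, of length `2Δ/φ'(b)`, and using
`φ'(b) ≥ c₁` gives the bound.
-/

theorem abs_sub_le_of_abs_deriv_le_mul_abs_sub {g : ℝ → ℝ} (hg : Differentiable ℝ g)
    {K b : ℝ} (hbd : ∀ x, |deriv g x| ≤ K * |x - b|) (t : ℝ) :
    |g t - g b| ≤ K * (t - b) ^ 2 / 2 := by
  have hB : IntervalIntegrable (fun x => K * |x - b| ^ 1) volume b t := by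
    apply Continuous.intervalIntegrable; fun_prop
  have hint : IntervalIntegrable (deriv g) volume b t :=
    hB.mono_fun' (measurable_deriv g).aestronglyMeasurable
      (Filter.Eventually.of_forall fun x => by simpa using hbd x)
  rw [← intervalIntegral.integral_deriv_eq_sub (fun x _ => hg x) hint, ← Real.norm_eq_abs,
    intervalIntegral.norm_intervalIntegral_eq]
  calc ‖∫ x in uIoc b t, deriv g x‖ ≤ ∫ x in uIoc b t, K * |x - b| ^ 1 :=
        norm_integral_le_of_norm_le hB.def'
          (Filter.Eventually.of_forall fun x => by simpa using hbd x)
    _ = K * (t - b) ^ 2 / 2 := by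
        rw [integral_const_mul, integral_pow_abs_sub_uIoc, sq_abs]; ring

theorem norm_ofReal_mul_cos_le (a θ : ℝ) : ‖((a * cos θ : ℝ) : ℂ)‖ ≤ |a| := by
  rw [Complex.norm_real, Real.norm_eq_abs, abs_mul]
  exact mul_le_of_le_one_right (abs_nonneg a) (abs_cos_le_one θ)

theorem abs_mul_cos_sub_mul_cos_le (a a₀ θ θ₀ : ℝ) :
    |a * cos θ - a₀ * cos θ₀| ≤ |a - a₀| + |a₀| * |θ - θ₀| :=
  calc |a * cos θ - a₀ * cos θ₀| = |(a - a₀) * cos θ + a₀ * (cos θ - cos θ₀)| := by ring_nf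
    _ ≤ |a - a₀| * |cos θ| + |a₀| * |cos θ - cos θ₀| := by
        rw [← abs_mul, ← abs_mul]; exact abs_add_le _ _
    _ ≤ |a - a₀| * 1 + |a₀| * |θ - θ₀| :=
        add_le_add (mul_le_mul_of_nonneg_left (abs_cos_le_one θ) (abs_nonneg _))
          (mul_le_mul_of_nonneg_left (abs_cos_sub_cos_le θ θ₀) (abs_nonneg _))
    _ = |a - a₀| + |a₀| * |θ - θ₀| := by ring

noncomputable def frozenMode (A φ : ℝ → ℝ) (b t : ℝ) : ℂ :=
  ((A b * cos (2 * π * (φ b + deriv φ b * (t - b))) : ℝ) : ℂ)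

theorem norm_sub_frozenMode_le {A φ : ℝ → ℝ} (hA : Differentiable ℝ A) (hφ : Differentiable ℝ φ)
    (hφ' : Differentiable ℝ (deriv φ)) {K M b : ℝ} (hA' : ∀ t, |deriv A t| ≤ K)
    (hφ'' : ∀ t, |deriv (deriv φ) t| ≤ K) (hM : |A b| ≤ M) (t : ℝ) :
    ‖((A t * cos (2 * π * φ t) : ℝ) : ℂ) - frozenMode A φ b t‖
      ≤ K * |t - b| + π * K * M * (t - b) ^ 2 := by
  have hAlip : |A t - A b| ≤ K * |t - b| :=
    convex_univ.norm_image_sub_le_of_norm_deriv_le (fun x _ => hA x) (fun x _ => hA' x)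
      (mem_univ b) (mem_univ t)
  have hφ'lip : ∀ x, |deriv φ x - deriv φ b| ≤ K * |x - b| := fun x =>
    convex_univ.norm_image_sub_le_of_norm_deriv_le (fun x _ => hφ' x) (fun x _ => hφ'' x)
      (mem_univ b) (mem_univ x)
  have hTaylor : |φ t - φ b - deriv φ b * (t - b)| ≤ K * (t - b) ^ 2 / 2 := by
    have hderiv : ∀ x, deriv (fun s => φ s - deriv φ b * s) x = deriv φ x - deriv φ b :=
      fun x => ((hφ x).hasDerivAt.sub ((hasDerivAt_id x).const_mul _)).deriv.trans (by simp)
    have := abs_sub_le_of_abs_deriv_le_mul_abs_sub (g := fun s => φ s - deriv φ b * s)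
      (hφ.sub (differentiable_id.const_mul _)) (fun x => (hderiv x).symm ▸ hφ'lip x) t
    rwa [show φ t - φ b - deriv φ b * (t - b) = φ t - deriv φ b * t - (φ b - deriv φ b * b) by
      ring]
  rw [frozenMode, ← Complex.ofReal_sub, Complex.norm_real, Real.norm_eq_abs]
  calc _ ≤ |A t - A b| + |A b| * |2 * π * φ t - 2 * π * (φ b + deriv φ b * (t - b))| :=
        abs_mul_cos_sub_mul_cos_le _ _ _ _
    _ = |A t - A b| + |A b| * (2 * π * |φ t - φ b - deriv φ b * (t - b)|) := by
        rw [← mul_sub, abs_mul, abs_of_pos two_pi_pos]; ring_nf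
    _ ≤ K * |t - b| + M * (2 * π * (K * (t - b) ^ 2 / 2)) := by
        gcongr
        exact (abs_nonneg _).trans hM
    _ = K * |t - b| + π * K * M * (t - b) ^ 2 := by ring

theorem intervalIntegral.integral_comp_mul_mul_inv (k : ℝ → ℂ) {c : ℝ} (hc : c ≠ 0) (l u : ℝ) :
    ∫ a in l..u, k (c * a) * (a : ℂ)⁻¹ = ∫ ξ in c * l..c * u, k ξ * (ξ : ℂ)⁻¹ := by
  have hc' : (c : ℂ) ≠ 0 := by exact_mod_cast hc
  have h : ∀ a : ℝ, k (c * a) * (a : ℂ)⁻¹ = c * (k (c * a) * ((c * a : ℝ) : ℂ)⁻¹) := by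
    intro a
    rcases eq_or_ne a 0 with rfl | ha
    · simp
    · have ha' : (a : ℂ) ≠ 0 := by exact_mod_cast ha
      push_cast; field_simp
  simp_rw [h]
  rw [intervalIntegral.integral_const_mul,
    intervalIntegral.integral_comp_mul_left (fun ξ => k ξ * (ξ : ℂ)⁻¹) hc, Complex.real_smul,
    Complex.ofReal_inv, mul_inv_cancel_left₀ hc']

theorem setIntegral_Ioi_eq_intervalIntegral_of_forall_compl_eq_zero {k : ℝ → ℂ} {p q : ℝ}
    (hp : 0 < p) (hpq : p ≤ q) (hk : ∀ ξ ∉ Icc p q, k ξ = 0) :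
    ∫ ξ in Ioi 0, k ξ = ∫ ξ in p..q, k ξ := by
  rw [setIntegral_eq_integral_of_forall_compl_eq_zero (s := Ioi 0) fun ξ hξ =>
      hk ξ fun h => hξ (hp.trans_le h.1),
    ← setIntegral_eq_integral_of_forall_compl_eq_zero hk, integral_Icc_eq_integral_Ioc,
    intervalIntegral.integral_of_le hpq]

theorem integral_exp_mul_conj_eq_conj_fourier (ψ : ℝ → ℂ) (w : ℝ) :
    ∫ x : ℝ, Complex.exp (2 * π * w * x * Complex.I) * conj (ψ x) = conj (𝓕 ψ w) := by
  rw [Real.fourier_real_eq_integral_exp_smul, ← integral_conj]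
  congr 1 with x
  rw [smul_eq_mul, map_mul, ← Complex.exp_conj]
  simp only [map_mul, Complex.conj_I, Complex.conj_ofReal]
  push_cast
  ring_nf

theorem integrable_exp_mul_conj {ψ : ℝ → ℂ} (hψ : Integrable ψ) (w : ℝ) :
    Integrable fun x : ℝ => Complex.exp (2 * π * w * x * Complex.I) * conj (ψ x) := by
  refine (Complex.conjLIE.integrable_comp_iff.mpr hψ).bdd_mul (c := 1) (by fun_prop)
    (Filter.Eventually.of_forall fun x => ?_)
  rw [show (2 * π * w * x * Complex.I : ℂ) = ((2 * π * w * x : ℝ) : ℂ) * Complex.I by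
    push_cast; ring, Complex.norm_exp_ofReal_mul_I]

theorem integral_cos_mul_conj {ψ : ℝ → ℂ} (hψ : Integrable ψ) (θ w : ℝ) :
    ∫ x : ℝ, (cos (2 * π * (θ + w * x)) : ℂ) * conj (ψ x)
      = (1 / 2 : ℂ) * Complex.exp (2 * π * θ * Complex.I) * conj (𝓕 ψ w)
        + (1 / 2 : ℂ) * Complex.exp (-(2 * π * θ * Complex.I)) * conj (𝓕 ψ (-w)) := by
  have hsplit : ∀ x : ℝ, (cos (2 * π * (θ + w * x)) : ℂ) * conj (ψ x)
      = (1 / 2 : ℂ) * Complex.exp (2 * π * θ * Complex.I) *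
          (Complex.exp (2 * π * w * x * Complex.I) * conj (ψ x))
        + (1 / 2 : ℂ) * Complex.exp (-(2 * π * θ * Complex.I)) *
          (Complex.exp (2 * π * (-w : ℝ) * x * Complex.I) * conj (ψ x)) := by
    intro x
    have hpos : Complex.exp (((2 * π * (θ + w * x) : ℝ) : ℂ) * Complex.I)
        = Complex.exp (2 * π * θ * Complex.I) * Complex.exp (2 * π * w * x * Complex.I) := by
      rw [← Complex.exp_add]; push_cast; ring_nf
    have hneg : Complex.exp (-((2 * π * (θ + w * x) : ℝ) : ℂ) * Complex.I)
        = Complex.exp (-(2 * π * θ * Complex.I)) *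
          Complex.exp (2 * π * (-w : ℝ) * x * Complex.I) := by
      rw [← Complex.exp_add]; push_cast; ring_nf
    rw [Complex.ofReal_cos, Complex.cos, hpos, hneg]
    ring
  simp_rw [hsplit]
  rw [integral_add ((integrable_exp_mul_conj hψ w).const_mul _)
      ((integrable_exp_mul_conj hψ (-w)).const_mul _), integral_const_mul,
    integral_const_mul, integral_exp_mul_conj_eq_conj_fourier,
    integral_exp_mul_conj_eq_conj_fourier]

section Dilation

variable {g ψ : ℝ → ℂ} {C : ℝ}

theorem integrable_comp_add_mul_mul (hg : Continuous g) (hgC : ∀ t, ‖g t‖ ≤ C)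
    (hψ : Integrable ψ) (a b : ℝ) : Integrable fun x => g (b + a * x) * ψ x :=
  hψ.bdd_mul (by fun_prop) (Filter.Eventually.of_forall fun x => hgC _)

theorem continuous_integral_comp_add_mul_mul (hg : Continuous g) (hgC : ∀ t, ‖g t‖ ≤ C)
    (hψ : Integrable ψ) (b : ℝ) : Continuous fun a => ∫ x, g (b + a * x) * ψ x :=
  continuous_of_dominated (bound := fun x => C * ‖ψ x‖)
    (fun a => (integrable_comp_add_mul_mul hg hgC hψ a b).aestronglyMeasurable)
    (fun a => Filter.Eventually.of_forall fun x => by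
      rw [norm_mul]; exact mul_le_mul_of_nonneg_right (hgC _) (norm_nonneg _))
    (hψ.norm.const_mul C) (Filter.Eventually.of_forall fun x => by fun_prop)

end Dilation

theorem SchwartzMap.integrable_abs_mul_norm (ψ : SchwartzMap ℝ ℂ) :
    Integrable fun x : ℝ => |x| * ‖ψ x‖ := by
  simpa using ψ.integrable_pow_mul volume 1

theorem SchwartzMap.integrable_sq_mul_norm (ψ : SchwartzMap ℝ ℂ) :
    Integrable fun x : ℝ => x ^ 2 * ‖ψ x‖ := by
  simpa using ψ.integrable_pow_mul volume 2

theorem norm_integral_comp_add_mul_mul_conj_le (ψ : SchwartzMap ℝ ℂ) {k : ℝ → ℂ} {α β b : ℝ}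
    (hk : ∀ t, ‖k t‖ ≤ α * |t - b| + β * (t - b) ^ 2) {a : ℝ} (ha : 0 ≤ a) :
    ‖∫ x, k (b + a * x) * conj (ψ x)‖
      ≤ α * a * (∫ x, |x| * ‖ψ x‖) + β * a ^ 2 * ∫ x, x ^ 2 * ‖ψ x‖ := by
  rw [← integral_const_mul, ← integral_const_mul, ← integral_add
    (ψ.integrable_abs_mul_norm.const_mul _) (ψ.integrable_sq_mul_norm.const_mul _)]
  refine norm_integral_le_of_norm_le ((ψ.integrable_abs_mul_norm.const_mul _).add
    (ψ.integrable_sq_mul_norm.const_mul _)) (Filter.Eventually.of_forall fun x => ?_)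
  calc ‖k (b + a * x) * conj (ψ x)‖ ≤ (α * |a * x| + β * (a * x) ^ 2) * ‖ψ x‖ := by
        rw [norm_mul, RCLike.norm_conj]
        simpa using mul_le_mul_of_nonneg_right (hk (b + a * x)) (norm_nonneg (ψ x))
    _ = α * a * (|x| * ‖ψ x‖) + β * a ^ 2 * (x ^ 2 * ‖ψ x‖) := by
        rw [abs_mul, abs_of_nonneg ha]; ring

theorem CWT_mul_inv_sqrt_pow_three (ψ g : ℝ → ℂ) {a : ℝ} (ha : 0 < a) (b : ℝ) :
    CWT ψ g a b * ((√a ^ 3 : ℝ) : ℂ)⁻¹ = (a : ℂ)⁻¹ * ∫ x, g (b + a * x) * conj (ψ x) := by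
  have hscale : ∫ t, g t * conj (ψ ((t - b) / a)) = a • ∫ x, g (b + a * x) * conj (ψ x) := by
    have := Measure.integral_comp_mul_left (fun y => g (b + y) * conj (ψ (y / a))) a
    simp only [mul_div_cancel_left₀ _ ha.ne', abs_inv, abs_of_pos ha] at this
    rw [this, smul_inv_smul₀ ha.ne', ← integral_add_left_eq_self _ b]
    simp
  have hsq : ((√a : ℝ) : ℂ) ^ 2 = a := by exact_mod_cast Real.sq_sqrt ha.le
  have hs : (√a : ℂ) ≠ 0 := by exact_mod_cast (Real.sqrt_pos.mpr ha).ne'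
  unfold CWT
  rw [hscale, Complex.real_smul, Complex.ofReal_pow, ← hsq]
  field_simp

theorem norm_setIntegral_CWT_sub_le (ψ : SchwartzMap ℝ ℂ) {g h : ℝ → ℂ} {C α β b l u : ℝ}
    (hg : Continuous g) (hh : Continuous h) (hgC : ∀ t, ‖g t‖ ≤ C) (hhC : ∀ t, ‖h t‖ ≤ C)
    (hgh : ∀ t, ‖g t - h t‖ ≤ α * |t - b| + β * (t - b) ^ 2) (hl : 0 < l) (hlu : l ≤ u) :
    ‖(∫ a in Icc l u, CWT ψ g a b * ((√a ^ 3 : ℝ) : ℂ)⁻¹) -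
        ∫ a in Icc l u, CWT ψ h a b * ((√a ^ 3 : ℝ) : ℂ)⁻¹‖
      ≤ α * (∫ x, |x| * ‖ψ x‖) * (u - l) + β * (∫ x, x ^ 2 * ‖ψ x‖) * ((u ^ 2 - l ^ 2) / 2) := by
  set I₁ := ∫ x, |x| * ‖ψ x‖
  set I₂ := ∫ x, x ^ 2 * ‖ψ x‖
  have hpos : ∀ a ∈ Icc l u, 0 < a := fun a ha => hl.trans_le ha.1
  have hψ : Integrable fun x => conj (ψ x) :=
    Complex.conjLIE.integrable_comp_iff.mpr ψ.integrable
  have hint : ∀ k : ℝ → ℂ, Continuous k → (∀ t, ‖k t‖ ≤ C) →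
      IntegrableOn (fun a : ℝ => (a : ℂ)⁻¹ * ∫ x, k (b + a * x) * conj (ψ x)) (Icc l u) :=
    fun k hk hkC => ContinuousOn.integrableOn_Icc <|
      (ContinuousOn.inv₀ (by fun_prop) fun a ha => by exact_mod_cast (hpos a ha).ne').mul
        (continuous_integral_comp_add_mul_mul hk hkC hψ b).continuousOn
  have hpt : ∀ a ∈ Icc l u, ‖(a : ℂ)⁻¹ * (∫ x, g (b + a * x) * conj (ψ x)) -
      (a : ℂ)⁻¹ * ∫ x, h (b + a * x) * conj (ψ x)‖ ≤ α * I₁ + β * I₂ * a := by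
    intro a ha
    have ha := hpos a ha
    rw [← mul_sub, ← integral_sub (integrable_comp_add_mul_mul hg hgC hψ a b)
      (integrable_comp_add_mul_mul hh hhC hψ a b), norm_mul, norm_inv, Complex.norm_real,
      Real.norm_of_nonneg ha.le]
    simp_rw [← sub_mul]
    calc a⁻¹ * ‖∫ x, (g (b + a * x) - h (b + a * x)) * conj (ψ x)‖
        ≤ a⁻¹ * (α * a * I₁ + β * a ^ 2 * I₂) := by
          gcongr
          exact norm_integral_comp_add_mul_mul_conj_le ψ (k := fun t => g t - h t) hgh ha.le
      _ = α * I₁ + β * I₂ * a := by field_simp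
  calc _ = ‖∫ a in Icc l u, ((a : ℂ)⁻¹ * (∫ x, g (b + a * x) * conj (ψ x)) -
        (a : ℂ)⁻¹ * ∫ x, h (b + a * x) * conj (ψ x))‖ := by
        rw [integral_sub (hint g hg hgC) (hint h hh hhC),
          setIntegral_congr_fun measurableSet_Icc
            fun a ha => CWT_mul_inv_sqrt_pow_three ψ g (hpos a ha) b,
          setIntegral_congr_fun measurableSet_Icc
            fun a ha => CWT_mul_inv_sqrt_pow_three ψ h (hpos a ha) b]
    _ ≤ ∫ a in Icc l u, (α * I₁ + β * I₂ * a) :=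
        norm_integral_le_of_norm_le (Continuous.integrableOn_Icc (by fun_prop))
          ((ae_restrict_iff' measurableSet_Icc).mpr (Filter.Eventually.of_forall hpt))
    _ = α * I₁ * (u - l) + β * I₂ * ((u ^ 2 - l ^ 2) / 2) := by
        rw [integral_Icc_eq_integral_Ioc, ← intervalIntegral.integral_of_le hlu,
          intervalIntegral.integral_add intervalIntegrable_const
            ((continuous_const_mul _).intervalIntegrable l u),
          intervalIntegral.integral_const, intervalIntegral.integral_const_mul, integral_id,
          smul_eq_mul]
        ring

theorem integral_frozenMode_comp_add_mul_mul_conj {ψ : ℝ → ℂ} (hψ : Integrable ψ)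
    (A φ : ℝ → ℝ) (b a : ℝ) (hneg : 𝓕 ψ (-(deriv φ b * a)) = 0) :
    ∫ x, frozenMode A φ b (b + a * x) * conj (ψ x)
      = A b * ((1 / 2 : ℂ) * Complex.exp (2 * π * φ b * Complex.I) *
          conj (𝓕 ψ (deriv φ b * a))) := by
  have h : ∀ x, frozenMode A φ b (b + a * x) * conj (ψ x)
      = A b * ((cos (2 * π * (φ b + deriv φ b * a * x)) : ℂ) * conj (ψ x)) := by
    intro x
    simp only [frozenMode, add_sub_cancel_left, Complex.ofReal_mul, mul_assoc]
  simp_rw [h]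
  rw [integral_const_mul, integral_cos_mul_conj hψ, hneg, map_zero, mul_zero, add_zero]

theorem setIntegral_CWT_frozenMode (ψ : SchwartzMap ℝ ℂ) {Δ : ℝ} (hΔ0 : 0 ≤ Δ) (hΔ1 : Δ < 1)
    (hsupp : ∀ ξ : ℝ, ξ ∉ Icc (1 - Δ) (1 + Δ) → 𝓕 (ψ : ℝ → ℂ) ξ = 0)
    (A φ : ℝ → ℝ) {b : ℝ} (hη : 0 < deriv φ b) :
    ∫ a in Icc ((1 - Δ) / deriv φ b) ((1 + Δ) / deriv φ b),
        CWT ψ (frozenMode A φ b) a b * ((√a ^ 3 : ℝ) : ℂ)⁻¹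
      = (1 / 2 : ℂ) * (∫ ξ in Ioi 0, conj (𝓕 (ψ : ℝ → ℂ) ξ) * (ξ : ℂ)⁻¹) * (A b : ℂ) *
          Complex.exp (2 * π * Complex.I * φ b) := by
  set η := deriv φ b
  have hl : 0 < (1 - Δ) / η := div_pos (by linarith) hη
  have hlu : (1 - Δ) / η ≤ (1 + Δ) / η := div_le_div_of_nonneg_right (by linarith) hη.le
  have hval : ∀ a ∈ Icc ((1 - Δ) / η) ((1 + Δ) / η),
      CWT ψ (frozenMode A φ b) a b * ((√a ^ 3 : ℝ) : ℂ)⁻¹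
        = A b * ((1 / 2 : ℂ) * Complex.exp (2 * π * φ b * Complex.I)) *
          (conj (𝓕 (ψ : ℝ → ℂ) (η * a)) * (a : ℂ)⁻¹) := by
    intro a ha
    have ha := hl.trans_le ha.1
    rw [CWT_mul_inv_sqrt_pow_three ψ _ ha,
      integral_frozenMode_comp_add_mul_mul_conj ψ.integrable, ← mul_assoc]
    · ring
    · exact hsupp _ fun h => by nlinarith [h.1, mul_pos hη ha]
  rw [setIntegral_congr_fun measurableSet_Icc hval, integral_const_mul,
    integral_Icc_eq_integral_Ioc, ← intervalIntegral.integral_of_le hlu,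
    intervalIntegral.integral_comp_mul_mul_inv (fun ξ => conj (𝓕 (ψ : ℝ → ℂ) ξ)) hη.ne',
    mul_div_cancel₀ (1 - Δ) hη.ne', mul_div_cancel₀ (1 + Δ) hη.ne',
    setIntegral_Ioi_eq_intervalIntegral_of_forall_compl_eq_zero (p := 1 - Δ) (q := 1 + Δ)
      (by linarith) (by linarith) fun ξ hξ => by rw [hsupp ξ hξ, map_zero, zero_mul]]
  ring_nf

theorem stmt9_general (ψ : SchwartzMap ℝ ℂ) (Δ : ℝ) (hΔ0 : 0 < Δ) (hΔ1 : Δ < 1)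
    (hsupp : ∀ ξ : ℝ, ξ ∉ Set.Icc (1 - Δ) (1 + Δ) → FourierTransform.fourier (⇑ψ : ℝ → ℂ) ξ = 0)
    (Cψ : ℂ)
    (hCψ : Cψ = ∫ ξ in Set.Ioi (0 : ℝ),
      (starRingEnd ℂ) (FourierTransform.fourier (⇑ψ : ℝ → ℂ) ξ) * ((ξ : ℝ) : ℂ)⁻¹)
    (ε c₁ M₂ : ℝ) (hε : 0 < ε) (hc₁ : 0 < c₁)
    (A : ℝ → ℝ) (φ : ℝ → ℝ) (f : ℝ → ℂ)
    (hf : ∀ t : ℝ, f t = ((A t * Real.cos (2 * Real.pi * φ t) : ℝ) : ℂ))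
    (hA : ContDiff ℝ 1 A) (hAbd : BddAbove (Set.range A)) (hApos : ∀ t : ℝ, 0 < A t)
    (hφ : ContDiff ℝ 2 φ)
    (hφ'lo : ∀ t : ℝ, c₁ ≤ deriv φ t) (hφ'hi : ∀ t : ℝ, deriv φ t ≤ M₂)
    (hA' : ∀ t : ℝ, |deriv A t| ≤ ε * deriv φ t)
    (hφ'' : ∀ t : ℝ, |deriv (deriv φ) t| ≤ ε * deriv φ t)
    (I₁ I₂ Asup : ℝ)
    (hI₁ : I₁ = ∫ x : ℝ, |x| * ‖ψ x‖) (hI₂ : I₂ = ∫ x : ℝ, x ^ 2 * ‖ψ x‖)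
    (hAsup : Asup = sSup (Set.range A)) :
    ∀ b : ℝ,
      ‖(∫ a in Set.Icc ((1 - Δ) / deriv φ b) ((1 + Δ) / deriv φ b),
            CWT (⇑ψ) f a b * ((Real.sqrt a ^ 3 : ℝ) : ℂ)⁻¹) -
          (1 / 2 : ℂ) * Cψ * (A b : ℂ) * Complex.exp (2 * Real.pi * Complex.I * φ b)‖ ≤
        ε * M₂ * (2 * Δ * I₁ / c₁ + 2 * Real.pi * Δ * Asup * I₂ / c₁ ^ 2) := by
  intro b
  have hη : 0 < deriv φ b := hc₁.trans_le (hφ'lo b)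
  have hAle : ∀ t, A t ≤ Asup := fun t => hAsup ▸ le_csSup hAbd ⟨t, rfl⟩
  have hεM₂ : ∀ t, ε * deriv φ t ≤ ε * M₂ := fun t => mul_le_mul_of_nonneg_left (hφ'hi t) hε.le
  have happrox : ∀ t, ‖f t - frozenMode A φ b t‖
      ≤ ε * M₂ * |t - b| + π * (ε * M₂) * Asup * (t - b) ^ 2 := fun t => hf t ▸
    norm_sub_frozenMode_le (hA.differentiable one_ne_zero) (hφ.differentiable two_ne_zero)
      hφ.differentiable_deriv_two (fun t => (hA' t).trans (hεM₂ t))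
      (fun t => (hφ'' t).trans (hεM₂ t)) ((abs_of_pos (hApos b)).trans_le (hAle b)) t
  have hfC : ∀ t, ‖f t‖ ≤ Asup := fun t => by
    rw [hf t]; exact (norm_ofReal_mul_cos_le _ _).trans ((abs_of_pos (hApos t)).trans_le (hAle t))
  have hfbC : ∀ t, ‖frozenMode A φ b t‖ ≤ Asup := fun t =>
    (norm_ofReal_mul_cos_le _ _).trans ((abs_of_pos (hApos b)).trans_le (hAle b))
  have hfc : Continuous f := by
    rw [funext hf]; have := hA.continuous; have := hφ.continuous; fun_prop
  have hfbc : Continuous (frozenMode A φ b) := by unfold frozenMode; fun_prop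
  have hI₁0 : 0 ≤ I₁ := hI₁ ▸ integral_nonneg fun x => by positivity
  have hI₂0 : 0 ≤ I₂ := hI₂ ▸ integral_nonneg fun x => by positivity
  have hAsup0 : 0 ≤ Asup := (hApos b).le.trans (hAle b)
  have hM₂ : 0 ≤ M₂ := hη.le.trans (hφ'hi b)
  rw [hCψ, ← setIntegral_CWT_frozenMode ψ hΔ0.le hΔ1 hsupp A φ hη]
  calc _ ≤ ε * M₂ * I₁ * ((1 + Δ) / deriv φ b - (1 - Δ) / deriv φ b) + π * (ε * M₂) * Asup *
        I₂ * ((((1 + Δ) / deriv φ b) ^ 2 - ((1 - Δ) / deriv φ b) ^ 2) / 2) :=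
        hI₁ ▸ hI₂ ▸ norm_setIntegral_CWT_sub_le ψ hfc hfbc hfC hfbC happrox
          (div_pos (by linarith) hη) (div_le_div_of_nonneg_right (by linarith) hη.le)
    _ = ε * M₂ * (2 * Δ * I₁ / deriv φ b + 2 * π * Δ * Asup * I₂ / deriv φ b ^ 2) := by
        field_simp; ring
    _ ≤ ε * M₂ * (2 * Δ * I₁ / c₁ + 2 * π * Δ * Asup * I₂ / c₁ ^ 2) := by
        gcongr <;> exact hφ'lo b

theorem stmt9 (ψ : SchwartzMap ℝ ℂ) (Δ : ℝ) (hΔ0 : 0 < Δ) (hΔ1 : Δ < 1)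
    (hsupp : ∀ ξ : ℝ, ξ ∉ Set.Icc (1 - Δ) (1 + Δ) → FourierTransform.fourier (⇑ψ : ℝ → ℂ) ξ = 0)
    (Cψ : ℂ)
    (hCψ : Cψ = ∫ ξ in Set.Ioi (0 : ℝ),
      (starRingEnd ℂ) (FourierTransform.fourier (⇑ψ : ℝ → ℂ) ξ) * ((ξ : ℝ) : ℂ)⁻¹)
    (ε c₁ M₂ : ℝ) (hε : 0 < ε) (hc₁ : 0 < c₁) (hc₁M₂ : c₁ ≤ M₂)
    (A : ℝ → ℝ) (φ : ℝ → ℝ) (f : ℝ → ℂ)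
    (hf : ∀ t : ℝ, f t = ((A t * Real.cos (2 * Real.pi * φ t) : ℝ) : ℂ))
    (hA : ContDiff ℝ 1 A) (hAbd : BddAbove (Set.range A)) (hApos : ∀ t : ℝ, 0 < A t)
    (hφ : ContDiff ℝ 2 φ)
    (hφ'lo : ∀ t : ℝ, c₁ ≤ deriv φ t) (hφ'hi : ∀ t : ℝ, deriv φ t ≤ M₂)
    (hA' : ∀ t : ℝ, |deriv A t| ≤ ε * deriv φ t)
    (hφ'' : ∀ t : ℝ, |deriv (deriv φ) t| ≤ ε * deriv φ t)
    (I₁ I₂ Asup : ℝ)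
    (hI₁ : I₁ = ∫ x : ℝ, |x| * ‖ψ x‖) (hI₂ : I₂ = ∫ x : ℝ, x ^ 2 * ‖ψ x‖)
    (hAsup : Asup = sSup (Set.range A)) :
    ∀ b : ℝ,
      ‖(∫ a in Set.Icc ((1 - Δ) / deriv φ b) ((1 + Δ) / deriv φ b),
            CWT (⇑ψ) f a b * ((Real.sqrt a ^ 3 : ℝ) : ℂ)⁻¹) -
          (1 / 2 : ℂ) * Cψ * (A b : ℂ) * Complex.exp (2 * Real.pi * Complex.I * φ b)‖ ≤
        ε * M₂ * (2 * Δ * I₁ / c₁ + 2 * Real.pi * Δ * Asup * I₂ / c₁ ^ 2) :=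
  stmt9_general ψ Δ hΔ0 hΔ1 hsupp Cψ hCψ ε c₁ M₂ hε hc₁ A φ f hf hA hAbd hApos hφ hφ'lo hφ'hi hA'
    hφ'' I₁ I₂ Asup hI₁ hI₂ hAsup
end

section
/- Let ψ : ℝ → ℂ be a Schwartz function and let f, e : ℝ → ℂ be bounded and measurable. Then for all a > 0 and b ∈ ℝ: (i) |W_{f+e}(a,b) − W_f(a,b)| ≤ ‖e‖∞ · a^{1/2} · ‖ψ‖_{L¹}; and (ii) |∂_b W_{f+e}(a,b) − ∂_b W_f(a,b)| ≤ ‖e‖∞ · a^{−1/2} · ‖ψ'‖_{L¹}, where ‖e‖∞ = sup_t |e(t)|. In particular, the continuous wavelet transform and its time derivative, and hence the synchrosqueezing-based estimation, are stable under bounded perturbations of the signal. -/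
/-!
The transform is linear in the signal, so both differences are transforms of the perturbation
`e` alone, and `‖W_e(a,b)‖ ≤ ‖e‖∞ a^{-1/2} ∫ |ψ((t-b)/a)| dt = ‖e‖∞ a^{1/2} ‖ψ‖₁`.
Differentiating under the integral sign, with a majorant coming from the decay of the Schwartz
function `ψ'`, gives `∂_b W_g(a,b) = -a⁻¹ W'_g(a,b)`, where `W'` is the transform with wavelet
`ψ'`; so (ii) is (i) for the wavelet `ψ'`, multiplied by `a⁻¹`.
-/

open MeasureTheory

lemma MeasureTheory.Integrable.comp_sub_div {F : Type*} [NormedAddCommGroup F] {φ : ℝ → F}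
    (hφ : Integrable φ) {a : ℝ} (ha : a ≠ 0) (b : ℝ) : Integrable fun t => φ ((t - b) / a) :=
  (hφ.comp_div ha).comp_sub_right b

lemma integral_norm_comp_sub_div {F : Type*} [NormedAddCommGroup F] (φ : ℝ → F) (a b : ℝ) :
    ∫ t, ‖φ ((t - b) / a)‖ = |a| * ∫ x, ‖φ x‖ := by
  rw [integral_sub_right_eq_self (fun t => ‖φ (t / a)‖) b,
    Measure.integral_comp_div (fun x => ‖φ x‖) a, smul_eq_mul]

section WaveletIntegrand

variable {φ g : ℝ → ℂ} {M a : ℝ}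

lemma integrable_mul_conj_comp_sub_div (hφ : Integrable φ) (hg : AEStronglyMeasurable g)
    (hM : ∀ t, ‖g t‖ ≤ M) (ha : a ≠ 0) (b : ℝ) :
    Integrable fun t => g t * (starRingEnd ℂ) (φ ((t - b) / a)) := by
  have hφ' := hφ.comp_sub_div ha b
  refine Integrable.bdd_mul (c := M) ?_ hg (.of_forall hM)
  exact hφ'.norm.mono' hφ'.aestronglyMeasurable.star (.of_forall fun t => by simp)

lemma norm_integral_mul_conj_comp_sub_div_le (hφ : Integrable φ) (hM : ∀ t, ‖g t‖ ≤ M)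
    (ha : 0 < a) (b : ℝ) :
    ‖∫ t, g t * (starRingEnd ℂ) (φ ((t - b) / a))‖ ≤ M * (a * ∫ x, ‖φ x‖) := by
  calc ‖∫ t, g t * (starRingEnd ℂ) (φ ((t - b) / a))‖
      ≤ ∫ t, M * ‖φ ((t - b) / a)‖ :=
        norm_integral_le_of_norm_le ((hφ.comp_sub_div ha.ne' b).norm.const_mul M)
          (.of_forall fun t => by
            rw [norm_mul, RCLike.norm_conj]
            exact mul_le_mul_of_nonneg_right (hM t) (norm_nonneg _))
    _ = M * (a * ∫ x, ‖φ x‖) := by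
        rw [integral_const_mul, integral_norm_comp_sub_div, abs_of_pos ha]

end WaveletIntegrand

lemma SchwartzMap.coe_derivCLM (ψ : SchwartzMap ℝ ℂ) : ⇑(derivCLM ℝ ℂ ψ) = deriv ψ :=
  funext (derivCLM_apply ℝ ψ)

lemma SchwartzMap.exists_norm_le_mul_inv_one_add_sq (φ : SchwartzMap ℝ ℂ) :
    ∃ D, ∀ x, ‖φ x‖ ≤ D * (1 + x ^ 2)⁻¹ := by
  obtain ⟨C₀, -, h₀⟩ := φ.decay 0 0
  obtain ⟨C₂, -, h₂⟩ := φ.decay 2 0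
  refine ⟨C₀ + C₂, fun x => ?_⟩
  have e₀ := h₀ x
  have e₂ := h₂ x
  simp only [pow_zero, one_mul, norm_iteratedFDeriv_zero, Real.norm_eq_abs, sq_abs] at e₀ e₂
  rw [← div_eq_mul_inv, le_div_iff₀ (by positivity)]
  linarith

-- Peetre's inequality for the weight `1 + x ^ 2`.
lemma one_add_sq_le_two_mul (x y : ℝ) : 1 + y ^ 2 ≤ 2 * (1 + (x - y) ^ 2) * (1 + x ^ 2) := by
  nlinarith [sq_nonneg (x + (x - y)), sq_nonneg (x * (x - y))]

lemma SchwartzMap.exists_integrable_bound_comp_sub_div (φ : SchwartzMap ℝ ℂ) {a : ℝ} (ha : 0 < a)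
    (b : ℝ) : ∃ h : ℝ → ℝ, Integrable h ∧
      ∀ t, ∀ b' ∈ Metric.ball b 1, ‖φ ((t - b') / a)‖ ≤ h t := by
  obtain ⟨D, hD⟩ := φ.exists_norm_le_mul_inv_one_add_sq
  have hD0 : 0 ≤ D := by simpa using (norm_nonneg _).trans (hD 0)
  refine ⟨fun t => D * (2 * (1 + a⁻¹ ^ 2)) * (1 + ((t - b) / a) ^ 2)⁻¹,
    ((integrable_inv_one_add_sq.comp_sub_div ha.ne' b).const_mul _), fun t b' hb' => ?_⟩
  refine (hD _).trans ?_
  have hshift : ((t - b') / a - (t - b) / a) ^ 2 ≤ a⁻¹ ^ 2 := by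
    rw [← sub_div, sub_sub_sub_cancel_left, div_eq_mul_inv, mul_pow]
    have : |b - b'| < 1 := by rwa [Metric.mem_ball, Real.dist_eq, abs_sub_comm] at hb'
    have := (sq_le_one_iff_abs_le_one (b - b')).mpr this.le
    nlinarith [sq_nonneg a⁻¹]
  have hpeetre := one_add_sq_le_two_mul ((t - b') / a) ((t - b) / a)
  show D * _ ≤ D * _ * _
  rw [mul_assoc]
  gcongr D * ?_
  rw [← div_eq_mul_inv, le_div_iff₀ (by positivity), inv_mul_le_iff₀ (by positivity)]
  nlinarith

section WaveletDerivative

variable {g : ℝ → ℂ} {M a : ℝ}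

lemma hasDerivAt_integral_mul_conj_comp_sub_div (ψ : SchwartzMap ℝ ℂ)
    (hg : AEStronglyMeasurable g) (hM : ∀ t, ‖g t‖ ≤ M) (ha : 0 < a) (b : ℝ) :
    HasDerivAt (fun b' => ∫ t, g t * (starRingEnd ℂ) (ψ ((t - b') / a)))
      (-(a : ℂ)⁻¹ * ∫ t, g t * (starRingEnd ℂ) (deriv ψ ((t - b) / a))) b := by
  set ψ' := SchwartzMap.derivCLM ℝ ℂ ψ
  have hψ' : deriv ψ = ψ' := (SchwartzMap.coe_derivCLM ψ).symm
  obtain ⟨h, hh, hbound⟩ := ψ'.exists_integrable_bound_comp_sub_div ha b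
  rw [← integral_const_mul, hψ']
  refine (hasDerivAt_integral_of_dominated_loc_of_deriv_le (bound := fun t => a⁻¹ * (M * h t))
    (F' := fun b' t => -(a : ℂ)⁻¹ * (g t * (starRingEnd ℂ) (ψ' ((t - b') / a))))
    (Metric.ball_mem_nhds b one_pos)
    (.of_forall fun b' => (integrable_mul_conj_comp_sub_div ψ.integrable hg hM ha.ne' b').1)
    (integrable_mul_conj_comp_sub_div ψ.integrable hg hM ha.ne' b)
    ((integrable_mul_conj_comp_sub_div ψ'.integrable hg hM ha.ne' b).const_mul _).1
    (.of_forall fun t b' hb' => ?_) ((hh.const_mul M).const_mul a⁻¹)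
    (.of_forall fun t b' _ => ?_)).2
  · have hM0 : 0 ≤ M := (norm_nonneg _).trans (hM t)
    rw [norm_mul, norm_mul, RCLike.norm_conj, norm_neg, norm_inv, Complex.norm_real,
      Real.norm_of_nonneg ha.le]
    gcongr
    · exact hM t
    · exact hbound t b' hb'
  · have hinner : HasDerivAt (fun b' : ℝ => (t - b') / a) (-a⁻¹) b' := by
      simpa [neg_div, div_eq_mul_inv] using ((hasDerivAt_id b').const_sub t).div_const a
    have := ((ψ.differentiableAt.hasDerivAt.scomp b' hinner).star).const_mul (g t)
    rw [hψ'] at this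
    refine this.congr_deriv ?_
    rw [Complex.real_smul, star_mul', RCLike.star_def, Complex.conj_ofReal]
    push_cast
    ring

end WaveletDerivative

section CWT

variable {ψ f e g : ℝ → ℂ} {M Mf Me a : ℝ}

lemma CWT_add (hψ : Integrable ψ) (hf : AEStronglyMeasurable f) (hMf : ∀ t, ‖f t‖ ≤ Mf)
    (he : AEStronglyMeasurable e) (hMe : ∀ t, ‖e t‖ ≤ Me) (ha : a ≠ 0) (b : ℝ) :
    CWT ψ (fun t => f t + e t) a b = CWT ψ f a b + CWT ψ e a b := by
  simp only [CWT, add_mul]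
  rw [integral_add (integrable_mul_conj_comp_sub_div hψ hf hMf ha b)
    (integrable_mul_conj_comp_sub_div hψ he hMe ha b), mul_add]

lemma norm_CWT_le (hψ : Integrable ψ) (hM : ∀ t, ‖g t‖ ≤ M) (ha : 0 < a) (b : ℝ) :
    ‖CWT ψ g a b‖ ≤ M * Real.sqrt a * ∫ x, ‖ψ x‖ := by
  have hsa : 0 < Real.sqrt a := Real.sqrt_pos.2 ha
  rw [CWT, norm_mul, norm_inv, Complex.norm_real, Real.norm_of_nonneg hsa.le]
  calc (Real.sqrt a)⁻¹ * ‖∫ t, g t * (starRingEnd ℂ) (ψ ((t - b) / a))‖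
      ≤ (Real.sqrt a)⁻¹ * (M * (a * ∫ x, ‖ψ x‖)) := by
        gcongr; exact norm_integral_mul_conj_comp_sub_div_le hψ hM ha b
    _ = M * (a / Real.sqrt a) * ∫ x, ‖ψ x‖ := by ring
    _ = M * Real.sqrt a * ∫ x, ‖ψ x‖ := by rw [Real.div_sqrt]

lemma hasDerivAt_CWT (ψ : SchwartzMap ℝ ℂ) (hg : AEStronglyMeasurable g) (hM : ∀ t, ‖g t‖ ≤ M)
    (ha : 0 < a) (b : ℝ) :
    HasDerivAt (fun b' => CWT ψ g a b') (-(a : ℂ)⁻¹ * CWT (deriv ψ) g a b) b := by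
  rw [CWT, mul_left_comm]
  exact (hasDerivAt_integral_mul_conj_comp_sub_div ψ hg hM ha b).const_mul _

end CWT

theorem stmt13 (ψ : SchwartzMap ℝ ℂ) (f e : ℝ → ℂ)
    (hfm : Measurable f) (hem : Measurable e)
    (hfb : BddAbove (Set.range fun t : ℝ => ‖f t‖))
    (heb : BddAbove (Set.range fun t : ℝ => ‖e t‖)) :
    ∀ a : ℝ, 0 < a → ∀ b : ℝ,
      (‖CWT (⇑ψ) (fun t => f t + e t) a b - CWT (⇑ψ) f a b‖ ≤
        (⨆ t : ℝ, ‖e t‖) * Real.sqrt a * ∫ x : ℝ, ‖ψ x‖) ∧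
      (∃ W₁ W₂ : ℂ,
        HasDerivAt (fun b' : ℝ => CWT (⇑ψ) (fun t => f t + e t) a b') W₁ b ∧
        HasDerivAt (fun b' : ℝ => CWT (⇑ψ) f a b') W₂ b ∧
        ‖W₁ - W₂‖ ≤ (⨆ t : ℝ, ‖e t‖) * (Real.sqrt a)⁻¹ * ∫ x : ℝ, ‖deriv (⇑ψ) x‖) := by
  intro a ha b
  have hMf : ∀ t, ‖f t‖ ≤ ⨆ t, ‖f t‖ := le_ciSup hfb
  have hMe : ∀ t, ‖e t‖ ≤ ⨆ t, ‖e t‖ := le_ciSup heb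
  have hψ' : Integrable (deriv ψ) := by
    rw [← SchwartzMap.coe_derivCLM]
    exact (SchwartzMap.derivCLM ℝ ℂ ψ).integrable
  have hadd {φ : ℝ → ℂ} (hφ : Integrable φ) :=
    CWT_add hφ hfm.aestronglyMeasurable hMf hem.aestronglyMeasurable hMe ha.ne' b
  refine ⟨?_, _, _, hasDerivAt_CWT ψ (g := fun t => f t + e t) (hfm.add hem).aestronglyMeasurable
    (fun t => norm_add_le_of_le (hMf t) (hMe t)) ha b,
    hasDerivAt_CWT ψ hfm.aestronglyMeasurable hMf ha b, ?_⟩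
  · rw [hadd ψ.integrable, add_sub_cancel_left]
    exact norm_CWT_le ψ.integrable hMe ha b
  · rw [← mul_sub, hadd hψ', add_sub_cancel_left, norm_mul, norm_neg, norm_inv, Complex.norm_real,
      Real.norm_of_nonneg ha.le]
    calc a⁻¹ * ‖CWT (deriv ψ) e a b‖
        ≤ a⁻¹ * ((⨆ t, ‖e t‖) * Real.sqrt a * ∫ x, ‖deriv ψ x‖) := by
          gcongr; exact norm_CWT_le hψ' hMe ha b
      _ = (⨆ t, ‖e t‖) * (Real.sqrt a / a) * ∫ x, ‖deriv ψ x‖ := by ring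
      _ = (⨆ t, ‖e t‖) * (Real.sqrt a)⁻¹ * ∫ x, ‖deriv ψ x‖ := by
          rw [Real.sqrt_div_self', one_div]
end
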